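/- arXiv:2510.24326 — 2 statements merged into one kernel-verified Lean document; each statement's English description precedes it below -/
import Mathlib

section
/- Let D be a C*-algebra and let C ⊆ D be a closed star-subalgebra. Then for every selfadjoint x ∈ C, Metric.infDist x {c ∈ C : 0 ≤ c} = Metric.infDist x {d ∈ D : 0 ≤ d}; that is, the inclusion C ⊆ D is a gauge maximal inclusion. (Note that for x ∈ C, 0 ≤ x in C if and only if 0 ≤ x in D, by spectral permanence.) -/
open scoped ComplexOrder

/-!
For selfadjoint `x` and any `d ≥ 0`, compressing `d - x` by `e = x⁻` gives
`e (d - x) e = e d e + e³ ≥ e³` (because `x⁻ x⁺ = 0`), and the C⋆-identity yields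
`‖e‖³ ≤ ‖e‖² ‖x - d‖`. So the distance from `x` to the positive cone of `D` is `‖x⁻‖`,
and it is attained at `x⁺`, which lies in `C` because `C` is closed under the continuous
functional calculus.
-/

lemma IsSelfAdjoint.norm_mul_mul_self_eq {A : Type*} [NonUnitalNormedRing A] [StarRing A]
    [CStarRing A] {e : A} (he : IsSelfAdjoint e) : ‖e * e * e‖ = ‖e‖ ^ 3 := by
  have hsq : ‖e * e‖ = ‖e‖ ^ 2 := by
    rw [sq, ← CStarRing.norm_star_mul_self, he.star_eq]
  refine le_antisymm ((norm_mul_le _ _).trans (by rw [hsq, ← pow_succ])) ?_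
  rcases (norm_nonneg e).eq_or_lt with h | hpos
  · rw [← h]; simp
  refine le_of_mul_le_mul_left ?_ hpos
  calc ‖e‖ * ‖e‖ ^ 3 = ‖star (e * e) * (e * e)‖ := by
        rw [CStarRing.norm_star_mul_self, hsq]; ring
    _ = ‖(e * e) * (e * e)‖ := by rw [star_mul, he.star_eq]
    _ = ‖e * (e * e * e)‖ := by simp only [mul_assoc]
    _ ≤ ‖e‖ * ‖e * e * e‖ := norm_mul_le _ _

section

variable {D : Type*} [NonUnitalCStarAlgebra D]

lemma IsSelfAdjoint.dist_posPart {x : D} (hx : IsSelfAdjoint x) : dist x x⁺ = ‖x⁻‖ := by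
  nth_rw 1 [dist_eq_norm, ← CFC.posPart_sub_negPart x hx]
  simp

variable [PartialOrder D] [StarOrderedRing D]

lemma IsSelfAdjoint.norm_negPart_le_norm_sub {x d : D} (hx : IsSelfAdjoint x) (hd : 0 ≤ d) :
    ‖x⁻‖ ≤ ‖x - d‖ := by
  set e := x⁻
  have he : IsSelfAdjoint e := (CFC.negPart_nonneg x).isSelfAdjoint
  have hex : e * x = -(e * e) := by
    conv_lhs => rw [← CFC.posPart_sub_negPart x hx]
    rw [mul_sub, CFC.negPart_mul_posPart, zero_sub]
  have hcube : e * e * e ≤ e * (d - x) * e := by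
    have hede : 0 ≤ e * d * e := by simpa [he.star_eq] using star_left_conjugate_nonneg hd e
    calc e * e * e ≤ e * d * e + e * e * e := le_add_of_nonneg_left hede
      _ = e * (d - x) * e := by rw [mul_sub, sub_mul, hex, neg_mul, sub_neg_eq_add]
  have hnorm : ‖e‖ ^ 3 ≤ ‖e‖ ^ 2 * ‖x - d‖ :=
    calc ‖e‖ ^ 3 = ‖e * e * e‖ := he.norm_mul_mul_self_eq.symm
      _ ≤ ‖e * (d - x) * e‖ := CStarAlgebra.norm_le_norm_of_nonneg_of_le
          (by simpa [he.star_eq] using star_left_conjugate_nonneg (CFC.negPart_nonneg x) e) hcube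
      _ ≤ ‖e‖ * ‖d - x‖ * ‖e‖ := (norm_mul_le _ _).trans (by gcongr; exact norm_mul_le _ _)
      _ = ‖e‖ ^ 2 * ‖x - d‖ := by rw [norm_sub_rev]; ring
  rcases (norm_nonneg e).eq_or_lt with h | hpos
  · rw [← h]; exact norm_nonneg _
  · exact le_of_mul_le_mul_left (by linarith) (pow_pos hpos 2)

lemma IsSelfAdjoint.infDist_nonneg_eq_norm_negPart {x : D} (hx : IsSelfAdjoint x) :
    Metric.infDist x {d : D | 0 ≤ d} = ‖x⁻‖ := by
  refine le_antisymm ?_ ((Metric.le_infDist ⟨0, le_rfl⟩).mpr fun d hd ↦ ?_)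
  · exact hx.dist_posPart ▸ Metric.infDist_le_dist_of_mem (CFC.posPart_nonneg x)
  · exact dist_eq_norm x d ▸ hx.norm_negPart_le_norm_sub hd

end

/-- If `C` is a closed star-subalgebra of a C*-algebra `D`, then for every
selfadjoint `x ∈ C` the distance of `x` to the positive cone of `C` equals the distance of
`x` to the positive cone of `D`; i.e. the inclusion `C ⊆ D` is a gauge maximal inclusion. -/
theorem stmt_5 {D : Type*} [NonUnitalCStarAlgebra D] [PartialOrder D] [StarOrderedRing D]
    (C : NonUnitalStarSubalgebra ℂ D) (hC : IsClosed (C : Set D))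
    (x : D) (hxC : x ∈ C) (hx : IsSelfAdjoint x) :
    Metric.infDist x {c : D | c ∈ C ∧ 0 ≤ c} = Metric.infDist x {d : D | 0 ≤ d} := by
  have hposC : x⁺ ∈ C := cfcₙ_mem (hs := hC) _ hxC
  refine le_antisymm ?_
    (Metric.infDist_le_infDist_of_subset (fun c hc ↦ hc.2) ⟨0, C.zero_mem, le_rfl⟩)
  calc Metric.infDist x {c : D | c ∈ C ∧ 0 ≤ c} ≤ dist x x⁺ :=
        Metric.infDist_le_dist_of_mem ⟨hposC, CFC.posPart_nonneg x⟩
    _ = Metric.infDist x {d : D | 0 ≤ d} := by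
        rw [hx.dist_posPart, hx.infDist_nonneg_eq_norm_negPart]
end

section
/- Let A be a C*-algebra and let E ⊆ A be a selfadjoint subspace. Then E is approximately positively generated (the closure of {p − q : p, q ∈ E₊} equals E_sa) if and only if for every n ∈ ℕ the space Mₙ(E) is approximately positively generated (the closure of {P − Q : P, Q ∈ Mₙ(E)₊} equals Mₙ(E)_sa). -/
/-!
For `n = 1`, `M₁(E)` is the image of `E` under a ⋆-isomorphism, and ⋆-isomorphisms of
C⋆-algebras are isometric order isomorphisms. Conversely, a selfadjoint `X ∈ Mₙ(E)` is the sum of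
the matrices `e_ij ⊗ z + e_ji ⊗ z*` with `z = X_ij / 2 ∈ E`. Writing `z = h + i k` with
`h, k ∈ E_sa` and approximating `h, k` by elements of `E₊ - E₊` reduces everything to `z = c p`
with `p = s* s ∈ E₊` and `|c| = 1`, where
`e_ij ⊗ c p + e_ji ⊗ c̄ p = R* R - e_ii ⊗ p - e_jj ⊗ p` for `R = e_ii ⊗ s + e_ij ⊗ c s`.
-/

noncomputable section

/-- The `n`-th matrix level `Mₙ(E)` of a subspace `E` of a C*-algebra `A`, realized inside a
C*-algebra `M` given together with a ⋆-algebra isomorphism `e : Mₙ(A) ≃⋆ₐ[ℂ] M`. -/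
def matrixLevelSet {A M : Type*} [NonUnitalCStarAlgebra A] [NonUnitalCStarAlgebra M] {n : ℕ}
    (E : Submodule ℂ A) (e : Matrix (Fin n) (Fin n) A ≃⋆ₐ[ℂ] M) : Set M :=
  {X : M | ∀ i j, e.symm X i j ∈ E}

/-- A subspace `S` of a C*-algebra `B` is approximately positively generated:
the closure of the set of differences of positive elements of `S` is the set of
selfadjoint elements of `S`. -/
def IsApproxPositivelyGenerated {B : Type*} [NonUnitalCStarAlgebra B] [PartialOrder B]
    (S : Set B) : Prop :=
  closure {y : B | ∃ p q : B, p ∈ S ∧ 0 ≤ p ∧ q ∈ S ∧ 0 ≤ q ∧ y = p - q} =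
    {x : B | x ∈ S ∧ star x = x}

open Matrix Complex

def nonnegDiffs {B : Type*} [Sub B] [Zero B] [LE B] (S : Set B) : Set B :=
  {y | ∃ p q : B, p ∈ S ∧ 0 ≤ p ∧ q ∈ S ∧ 0 ≤ q ∧ y = p - q}

section Order

variable {B : Type*} [NonUnitalRing B] [PartialOrder B] [StarRing B] [StarOrderedRing B]

def AddSubmonoid.nonnegDiffs (S : AddSubmonoid B) : AddSubgroup B where
  carrier := _root_.nonnegDiffs S
  zero_mem' := ⟨0, 0, S.zero_mem, le_rfl, S.zero_mem, le_rfl, (sub_zero 0).symm⟩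
  add_mem' := by
    rintro _ _ ⟨p, q, hp, hp0, hq, hq0, rfl⟩ ⟨p', q', hp', hp0', hq', hq0', rfl⟩
    exact ⟨p + p', q + q', S.add_mem hp hp', add_nonneg hp0 hp0', S.add_mem hq hq',
      add_nonneg hq0 hq0', (add_sub_add_comm p p' q q').symm⟩
  neg_mem' := by
    rintro _ ⟨p, q, hp, hp0, hq, hq0, rfl⟩
    exact ⟨q, p, hq, hq0, hp, hp0, neg_sub p q⟩

variable [TopologicalSpace B] [ContinuousStar B] [T2Space B]

lemma closure_nonnegDiffs_subset {S : AddSubgroup B} (hS : IsClosed (S : Set B)) :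
    closure (nonnegDiffs S) ⊆ {x | x ∈ S ∧ star x = x} := by
  refine closure_minimal ?_ (hS.inter (isClosed_eq continuous_star continuous_id))
  rintro _ ⟨p, q, hp, hp0, hq, hq0, rfl⟩
  exact ⟨S.sub_mem hp hq, by rw [star_sub, hp0.isSelfAdjoint.star_eq, hq0.isSelfAdjoint.star_eq]⟩

end Order

lemma isApproxPositivelyGenerated_iff_subset {B : Type*} [NonUnitalCStarAlgebra B]
    [PartialOrder B] [StarOrderedRing B] {S : AddSubgroup B} (hS : IsClosed (S : Set B)) :
    IsApproxPositivelyGenerated (S : Set B) ↔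
      {x | x ∈ S ∧ star x = x} ⊆ closure (nonnegDiffs S) :=
  ⟨fun h => h.symm.subset, fun h => (closure_nonnegDiffs_subset hS).antisymm h⟩

lemma IsApproxPositivelyGenerated.map_mem {A B : Type*} [NonUnitalCStarAlgebra A]
    [PartialOrder A] [AddGroup B] [TopologicalSpace B] {S : Set A}
    (hS : IsApproxPositivelyGenerated S) {φ : A →+ B} (hφ : Continuous φ) {C : AddSubgroup B}
    (hC : IsClosed (C : Set B)) (hpos : ∀ p ∈ S, 0 ≤ p → φ p ∈ C) {x : A} (hx : x ∈ S)
    (hxsa : star x = x) : φ x ∈ C := by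
  refine closure_minimal (s := nonnegDiffs S) ?_ (hC.preimage hφ) (hS.symm.subset ⟨hx, hxsa⟩)
  rintro _ ⟨p, q, hp, hp0, hq, hq0, rfl⟩
  show φ (p - q) ∈ C
  rw [map_sub]
  exact C.sub_mem (hpos p hp hp0) (hpos q hq hq0)

section MatrixIdentities

variable {ι : Type*} [Fintype ι] [DecidableEq ι]

lemma Matrix.add_star_eq_sum_single {R : Type*} [AddCommMonoid R] [StarAddMonoid R]
    (X : Matrix ι ι R) :
    X + star X = ∑ i, ∑ j, (single i j (X i j) + single j i (star (X i j))) := by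
  have hstar : star X = ∑ i, ∑ j, single j i (star (X i j)) := by
    rw [Finset.sum_comm, matrix_eq_sum_single (star X)]
    simp [star_apply]
  rw [hstar]
  conv_lhs => arg 1; rw [matrix_eq_sum_single X]
  simp only [Finset.sum_add_distrib]

lemma Matrix.star_mul_self_single_add_single {R : Type*} [NonUnitalRing R] [StarRing R]
    [Module ℂ R] [StarModule ℂ R] [IsScalarTower ℂ R R] [SMulCommClass ℂ R R]
    (i j : ι) (s : R) (c : ℂ) :
    star (single i i s + single i j (c • s)) * (single i i s + single i j (c • s)) =
      single i i (star s * s) + single i j (c • (star s * s)) +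
        single j i (star c • (star s * s)) + single j j ((star c * c) • (star s * s)) := by
  simp only [star_eq_conjTranspose, conjTranspose_add, conjTranspose_single, add_mul, mul_add,
    single_mul_single_same, star_smul, mul_smul_comm, smul_mul_assoc, smul_smul, mul_comm c]
  abel

end MatrixIdentities

section StarAlgEquiv

variable {A B : Type*} [NonUnitalCStarAlgebra A] [PartialOrder A] [StarOrderedRing A]
  [NonUnitalCStarAlgebra B] [PartialOrder B] [StarOrderedRing B]

lemma StarAlgEquiv.image_nonnegDiffs (g : A ≃⋆ₐ[ℂ] B) (S : Set A) :
    g '' nonnegDiffs S = nonnegDiffs (g '' S) := by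
  ext y
  constructor
  · rintro ⟨_, ⟨p, q, hp, hp0, hq, hq0, rfl⟩, rfl⟩
    exact ⟨g p, g q, ⟨p, hp, rfl⟩, map_nonneg g hp0, ⟨q, hq, rfl⟩, map_nonneg g hq0, map_sub g p q⟩
  · rintro ⟨_, _, ⟨p, hp, rfl⟩, hp0, ⟨q, hq, rfl⟩, hq0, rfl⟩
    rw [← map_zero g, map_le_map_iff] at hp0 hq0
    exact ⟨p - q, ⟨p, q, hp, hp0, hq, hq0, rfl⟩, map_sub g p q⟩

lemma StarAlgEquiv.image_selfAdjoint (g : A ≃⋆ₐ[ℂ] B) (S : Set A) :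
    g '' {x | x ∈ S ∧ star x = x} = {x | x ∈ g '' S ∧ star x = x} := by
  ext y
  constructor
  · rintro ⟨x, ⟨hx, hsa⟩, rfl⟩
    exact ⟨⟨x, hx, rfl⟩, by rw [← map_star, hsa]⟩
  · rintro ⟨⟨x, hx, rfl⟩, hsa⟩
    exact ⟨x, ⟨hx, g.injective ((map_star g x).trans hsa)⟩, rfl⟩

lemma StarAlgEquiv.isApproxPositivelyGenerated_image_iff (g : A ≃⋆ₐ[ℂ] B) (S : Set A) :
    IsApproxPositivelyGenerated (g '' S) ↔ IsApproxPositivelyGenerated S := by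
  show closure (nonnegDiffs (g '' S)) = _ ↔ closure (nonnegDiffs S) = _
  rw [← g.image_nonnegDiffs, ← g.image_selfAdjoint,
    (NonUnitalStarAlgHom.isometry g g.injective).isClosedEmbedding.closure_image_eq,
    (Set.image_injective.mpr (EquivLike.injective g)).eq_iff]

end StarAlgEquiv

@[simps!]
def Matrix.uniqueStarAlgEquiv (R : Type*) {m A : Type*} [Fintype m] [Unique m]
    [NonUnitalNonAssocSemiring A] [Star A] [SMul R A] : Matrix m m A ≃⋆ₐ[R] A where
  __ := uniqueAddEquiv
  map_mul' _ _ := by simp [mul_apply]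
  map_star' _ := rfl
  map_smul' _ _ := rfl

lemma matrixLevelSet_fin_one {A M : Type*} [NonUnitalCStarAlgebra A] [NonUnitalCStarAlgebra M]
    (E : Submodule ℂ A) (e : Matrix (Fin 1) (Fin 1) A ≃⋆ₐ[ℂ] M) :
    matrixLevelSet E e = (uniqueStarAlgEquiv ℂ).symm.trans e '' E := by
  ext x
  constructor
  · intro hx
    refine ⟨e.symm x 0 0, hx 0 0, ?_⟩
    conv_rhs => rw [← e.apply_symm_apply x]
    rw [StarAlgEquiv.trans_apply]
    congr 1
    ext i j
    simp [Subsingleton.elim i 0, Subsingleton.elim j 0]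
  · rintro ⟨a, ha, rfl⟩ i j
    rw [StarAlgEquiv.trans_apply, e.symm_apply_apply]
    exact ha

lemma Matrix.continuous_single {ι R : Type*} [DecidableEq ι] [Zero R] [TopologicalSpace R]
    (i j : ι) : Continuous (single i j : R → Matrix ι ι R) :=
  continuous_pi fun k => continuous_pi fun l => by
    simp only [single_apply]
    split_ifs
    exacts [continuous_id, continuous_const]

section MatrixLevel

variable {A B : Type*} [NonUnitalCStarAlgebra A] [NonUnitalCStarAlgebra B]
  {n : ℕ} (E : Submodule ℂ A) (f : Matrix (Fin n) (Fin n) A ≃⋆ₐ[ℂ] B)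

def matrixLevel : Submodule ℂ B where
  carrier := matrixLevelSet E f
  add_mem' hx hy i j := by simpa using E.add_mem (hx i j) (hy i j)
  zero_mem' i j := by simp
  smul_mem' c x hx i j := by simpa using E.smul_mem c (hx i j)

lemma single_mem_matrixLevel {a : A} (ha : a ∈ E) (i j : Fin n) :
    f (single i j a) ∈ matrixLevel E f := fun k l => by
  simp only [StarAlgEquiv.symm_apply_apply, single_apply]
  split_ifs
  exacts [ha, E.zero_mem]

variable [PartialOrder A] [StarOrderedRing A]

/- `CStarMatrix ι ι A` is `Matrix ι ι A` carrying the C⋆-norm, and its topology is the product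
topology of `Matrix ι ι A`. -/
lemma StarAlgEquiv.continuous_of_matrix {ι : Type*} [Fintype ι] (g : Matrix ι ι A ≃⋆ₐ[ℂ] B) :
    Continuous g :=
  let g' : CStarMatrix ι ι A ≃⋆ₐ[ℂ] B := g
  (NonUnitalStarAlgHom.isometry g' g'.injective).continuous

lemma StarAlgEquiv.continuous_symm_of_matrix {ι : Type*} [Fintype ι]
    (g : Matrix ι ι A ≃⋆ₐ[ℂ] B) : Continuous g.symm :=
  let g' : B ≃⋆ₐ[ℂ] CStarMatrix ι ι A := g.symm
  (NonUnitalStarAlgHom.isometry g' g'.injective).continuous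

lemma isClosed_matrixLevelSet (hE : IsClosed (E : Set A)) : IsClosed (matrixLevelSet E f) := by
  have : matrixLevelSet E f = ⋂ (i) (j), {x | f.symm x i j ∈ E} := by
    ext; simp [matrixLevelSet]
  rw [this]
  exact isClosed_iInter fun i => isClosed_iInter fun j =>
    hE.preimage (f.continuous_symm_of_matrix.matrix_elem i j)

end MatrixLevel

open scoped ComplexStarModule

section Forward

variable {A B : Type*} [NonUnitalCStarAlgebra A] [PartialOrder A] [StarOrderedRing A]
  [NonUnitalCStarAlgebra B] [PartialOrder B] [StarOrderedRing B]
  {n : ℕ} (E : Submodule ℂ A) (f : Matrix (Fin n) (Fin n) A ≃⋆ₐ[ℂ] B)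

lemma map_single_add_single_star_mem_nonnegDiffs {c : ℂ} (hc : star c * c = 1) {p : A}
    (hpE : p ∈ E) (hp : 0 ≤ p) (i j : Fin n) :
    f (single i j (c • p) + single j i (star (c • p))) ∈
      (matrixLevel E f).toAddSubmonoid.nonnegDiffs := by
  obtain ⟨s, rfl⟩ := CStarAlgebra.nonneg_iff_eq_star_mul_self.mp hp
  set R := single i i s + single i j (c • s)
  have hR := star_mul_self_single_add_single i j s c
  rw [hc, one_smul] at hR
  have hdiag (k : Fin n) :
      f (single k k (star s * s)) = star (f (single k k s)) * f (single k k s) := by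
    rw [← map_star, ← map_mul, star_eq_conjTranspose, conjTranspose_single, single_mul_single_same]
  refine ⟨f (star R * R), f (single i i (star s * s) + single j j (star s * s)), ?_, ?_, ?_, ?_, ?_⟩
  · rw [hR, map_add, map_add, map_add]
    exact add_mem (add_mem (add_mem (single_mem_matrixLevel E f hpE i i)
      (single_mem_matrixLevel E f (E.smul_mem c hpE) i j))
      (single_mem_matrixLevel E f (E.smul_mem (star c) hpE) j i))
      (single_mem_matrixLevel E f hpE j j)
  · rw [map_mul, map_star]
    exact star_mul_self_nonneg _
  · rw [map_add]
    exact add_mem (single_mem_matrixLevel E f hpE i i) (single_mem_matrixLevel E f hpE j j)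
  · rw [map_add, hdiag, hdiag]
    exact add_nonneg (star_mul_self_nonneg _) (star_mul_self_nonneg _)
  · rw [← map_sub, hR, star_smul, hp.isSelfAdjoint.star_eq]
    congr 1
    abel

lemma map_single_add_single_star_mem_closure (hEstar : ∀ x ∈ E, star x ∈ E)
    (hE : IsApproxPositivelyGenerated (E : Set A)) {z : A} (hz : z ∈ E) (i j : Fin n) :
    f (single i j z + single j i (star z)) ∈
      (matrixLevel E f).toAddSubmonoid.nonnegDiffs.topologicalClosure := by
  set D := (matrixLevel E f).toAddSubmonoid.nonnegDiffs
  set C := D.topologicalClosure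
  let τ : A →+ B := AddMonoidHom.mk' (fun a => f (single i j a + single j i (star a))) fun a b => by
    simp only [star_add, single_add, map_add]
    abel
  have hτ : Continuous τ := f.continuous_of_matrix.comp
    ((Matrix.continuous_single i j).add ((Matrix.continuous_single j i).comp continuous_star))
  have hselfAdjoint (c : ℂ) (hc : star c * c = 1) (h : A) (hh : h ∈ E) (hsa : star h = h) :
      τ (c • h) ∈ C :=
    hE.map_mem (φ := τ.comp (DistribSMul.toAddMonoidHom A c))
      (hτ.comp (continuous_const_smul c)) D.isClosed_topologicalClosure
      (fun p hp hp0 => D.le_topologicalClosure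
        (map_single_add_single_star_mem_nonnegDiffs E f hc hp hp0 i j)) hh hsa
  have hre : (ℜ z : A) ∈ E := by
    rw [realPart_apply_coe]
    exact E.smul_of_tower_mem _ (E.add_mem hz (hEstar z hz))
  have him : (ℑ z : A) ∈ E := by
    rw [imaginaryPart_apply_coe]
    exact E.smul_mem _ (E.smul_of_tower_mem _ (E.sub_mem hz (hEstar z hz)))
  show τ z ∈ C
  rw [← realPart_add_I_smul_imaginaryPart z, ← one_smul ℂ (ℜ z : A), map_add]
  exact C.add_mem (hselfAdjoint 1 (by simp) _ hre (selfAdjoint.mem_iff.mp (ℜ z).2))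
    (hselfAdjoint I (by simp) _ him (selfAdjoint.mem_iff.mp (ℑ z).2))

theorem isApproxPositivelyGenerated_matrixLevelSet (hEclosed : IsClosed (E : Set A))
    (hEstar : ∀ x ∈ E, star x ∈ E) (hE : IsApproxPositivelyGenerated (E : Set A)) :
    IsApproxPositivelyGenerated (matrixLevelSet E f) := by
  refine (isApproxPositivelyGenerated_iff_subset (S := (matrixLevel E f).toAddSubgroup)
    (isClosed_matrixLevelSet E f hEclosed)).mpr ?_
  rintro x ⟨hx, hxsa⟩
  set Y := (2 : ℝ)⁻¹ • f.symm x
  have hY : f.symm x = Y + star Y := by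
    rw [star_smul, star_trivial, ← map_star, hxsa, ← add_smul]
    norm_num
  have hsum : x = ∑ i, ∑ j, f (single i j (Y i j) + single j i (star (Y i j))) := by
    rw [← f.apply_symm_apply x, hY, add_star_eq_sum_single, map_sum]
    simp only [map_sum]
  rw [hsum]
  exact sum_mem fun i _ => sum_mem fun j _ => map_single_add_single_star_mem_closure E f hEstar hE
    (E.smul_of_tower_mem _ (hx i j)) i j

end Forward

/-- A selfadjoint subspace `E` of a C*-algebra `A` is approximately
positively generated if and only if `Mₙ(E)` is approximately positively generated for
every `n ∈ ℕ`. -/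
theorem stmt_7 {A : Type*} [NonUnitalCStarAlgebra A] [PartialOrder A] [StarOrderedRing A]
    (E : Submodule ℂ A) (hEclosed : IsClosed (E : Set A)) (hEstar : ∀ x ∈ E, star x ∈ E)
    (M : ℕ → Type*) [∀ n, NonUnitalCStarAlgebra (M n)] [∀ n, PartialOrder (M n)]
    [∀ n, StarOrderedRing (M n)]
    (e : ∀ n, Matrix (Fin n) (Fin n) A ≃⋆ₐ[ℂ] M n) :
    IsApproxPositivelyGenerated (E : Set A) ↔
      ∀ n : ℕ, IsApproxPositivelyGenerated (matrixLevelSet E (e n)) := by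
  refine ⟨fun hE n => isApproxPositivelyGenerated_matrixLevelSet E (e n) hEclosed hEstar hE,
    fun h => ?_⟩
  rw [← ((uniqueStarAlgEquiv ℂ).symm.trans (e 1)).isApproxPositivelyGenerated_image_iff,
    ← matrixLevelSet_fin_one]
  exact h 1
end
end
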